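/- arXiv:2305.14349 — 2 statements merged into one kernel-verified Lean document; each statement's English description precedes it below -/
import Mathlib

section
/- The value map is monotone with respect to the lexicographic order on digit sequences: if γ, δ : ℕ → {0,1,2} satisfy γ ≤ δ in the lexicographic order (i.e., γ = δ or at the first index where they differ the digit of γ is smaller), then val(γ) ≤ val(δ). -/
open scoped BigOperators

/-- `β j = ∑_{t < j} p t`. -/
noncomputable def salemBeta (p : Fin 3 → ℝ) (j : Fin 3) : ℝ :=
  ∑ t ∈ Finset.univ.filter (fun t => t < j), p t

/-- The value of a digit sequence `γ : ℕ → {0,1,2}` (indexed from 0):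
`val γ = β (γ 0) + ∑_{k ≥ 1} β (γ k) · ∏_{r < k} p (γ r)`. -/
noncomputable def salemVal (p : Fin 3 → ℝ) (γ : ℕ → Fin 3) : ℝ :=
  ∑' k : ℕ, salemBeta p (γ k) * ∏ r ∈ Finset.range k, p (γ r)

/-- The digit operator θ: θ(0)=0, θ(1)=2, θ(2)=1. -/
def theta : Fin 3 → Fin 3 := ![0, 2, 1]

/-- The cylinder with base given by the first `m` values of `c`. -/
def cylinder (p : Fin 3 → ℝ) (m : ℕ) (c : ℕ → Fin 3) : Set ℝ :=
  { x | ∃ γ : ℕ → Fin 3, (∀ r < m, γ r = c r) ∧ salemVal p γ = x }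

/-- The sequence starting with the first `m` digits of `c` and continuing with the
constant digit `j`. -/
def extendW (m : ℕ) (c : ℕ → Fin 3) (j : Fin 3) : ℕ → Fin 3 :=
  fun k => if k < m then c k else j

lemma salemBeta0 (p : Fin 3 → ℝ) : salemBeta p 0 = 0 := by
  simp [salemBeta]

lemma salemBeta1 (p : Fin 3 → ℝ) : salemBeta p 1 = p 0 := by
  rw [salemBeta]
  rw [show Finset.univ.filter (fun t => t < (1:Fin 3)) = {0} from by decide]
  simp

lemma salemBeta2 (p : Fin 3 → ℝ) : salemBeta p 2 = p 0 + p 1 := by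
  rw [salemBeta]
  rw [show Finset.univ.filter (fun t => t < (2:Fin 3)) = {0, 1} from by decide]
  simp

lemma salemBeta_nonneg (p : Fin 3 → ℝ) (hp : ∀ i, 0 < p i ∧ p i < 1) (j : Fin 3) :
    0 ≤ salemBeta p j := by
  fin_cases j
  · rw [show (⟨0, by omega⟩ : Fin 3) = 0 from rfl, salemBeta0]
  · rw [show (⟨1, by omega⟩ : Fin 3) = 1 from rfl, salemBeta1]; exact (hp 0).1.le
  · rw [show (⟨2, by omega⟩ : Fin 3) = 2 from rfl, salemBeta2]
    nlinarith [(hp 0).1, (hp 1).1]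

lemma salemBeta_add_le (p : Fin 3 → ℝ) (hp : ∀ i, 0 < p i ∧ p i < 1)
    (hsum : p 0 + p 1 + p 2 = 1) {i j : Fin 3} (hij : i < j) :
    salemBeta p i + p i ≤ salemBeta p j := by
  fin_cases i <;> fin_cases j <;>
    simp only [show (⟨0, by omega⟩ : Fin 3) = 0 from rfl,
      show (⟨1, by omega⟩ : Fin 3) = 1 from rfl,
      show (⟨2, by omega⟩ : Fin 3) = 2 from rfl,
      salemBeta0, salemBeta1, salemBeta2] at hij ⊢ <;>
    first
      | linarith [(hp 0).1, (hp 1).1, (hp 2).1]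
      | exact absurd hij (by decide)

lemma salemBeta_add_one_le (p : Fin 3 → ℝ) (hp : ∀ i, 0 < p i ∧ p i < 1)
    (hsum : p 0 + p 1 + p 2 = 1) (j : Fin 3) :
    salemBeta p j + p j ≤ 1 := by
  fin_cases j <;>
    simp only [show (⟨0, by omega⟩ : Fin 3) = 0 from rfl,
      show (⟨1, by omega⟩ : Fin 3) = 1 from rfl,
      show (⟨2, by omega⟩ : Fin 3) = 2 from rfl,
      salemBeta0, salemBeta1, salemBeta2] <;>
    linarith [(hp 0).1, (hp 1).1, (hp 2).1]

lemma salemBeta_le_one (p : Fin 3 → ℝ) (hp : ∀ i, 0 < p i ∧ p i < 1)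
    (hsum : p 0 + p 1 + p 2 = 1) (j : Fin 3) :
    salemBeta p j ≤ 1 := by
  linarith [salemBeta_add_one_le p hp hsum j, (hp j).1]

lemma prod_nonneg' (p : Fin 3 → ℝ) (hp : ∀ i, 0 < p i ∧ p i < 1) (γ : ℕ → Fin 3) (k : ℕ) :
    0 ≤ ∏ r ∈ Finset.range k, p (γ r) :=
  Finset.prod_nonneg fun r _ => (hp (γ r)).1.le

lemma salemSummable (p : Fin 3 → ℝ) (hp : ∀ i, 0 < p i ∧ p i < 1)
    (hsum : p 0 + p 1 + p 2 = 1) (γ : ℕ → Fin 3) :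
    Summable (fun k => salemBeta p (γ k) * ∏ r ∈ Finset.range k, p (γ r)) := by
  set c : ℝ := max (p 0) (max (p 1) (p 2)) with hc
  have hc0 : 0 ≤ c := le_trans (hp 0).1.le (le_max_left _ _)
  have hc1 : c < 1 := by
    simp only [hc, max_lt_iff]
    exact ⟨(hp 0).2, (hp 1).2, (hp 2).2⟩
  have hj : ∀ j : Fin 3, p j ≤ c := by
    intro j
    fin_cases j <;> simp [hc, le_max_iff, le_refl]
  refine Summable.of_nonneg_of_le ?_ ?_ (summable_geometric_of_lt_one hc0 hc1)
  · intro k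
    exact mul_nonneg (salemBeta_nonneg p hp _) (prod_nonneg' p hp γ k)
  · intro k
    calc salemBeta p (γ k) * ∏ r ∈ Finset.range k, p (γ r)
        ≤ 1 * ∏ r ∈ Finset.range k, p (γ r) :=
          mul_le_mul_of_nonneg_right (salemBeta_le_one p hp hsum _)
            (prod_nonneg' p hp γ k)
      _ = ∏ r ∈ Finset.range k, p (γ r) := one_mul _
      _ ≤ ∏ r ∈ Finset.range k, c :=
          Finset.prod_le_prod (fun r _ => (hp (γ r)).1.le) (fun r _ => hj (γ r))
      _ = c ^ k := by simp

lemma salemVal_nonneg (p : Fin 3 → ℝ) (hp : ∀ i, 0 < p i ∧ p i < 1) (γ : ℕ → Fin 3) :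
    0 ≤ salemVal p γ :=
  tsum_nonneg fun k => mul_nonneg (salemBeta_nonneg p hp _) (prod_nonneg' p hp γ k)

lemma salemVal_le_one (p : Fin 3 → ℝ) (hp : ∀ i, 0 < p i ∧ p i < 1)
    (hsum : p 0 + p 1 + p 2 = 1) (γ : ℕ → Fin 3) :
    salemVal p γ ≤ 1 := by
  apply Summable.tsum_le_of_sum_range_le (salemSummable p hp hsum γ)
  intro n
  have key : ∀ k, salemBeta p (γ k) * ∏ r ∈ Finset.range k, p (γ r) ≤
      (∏ r ∈ Finset.range k, p (γ r)) - ∏ r ∈ Finset.range (k+1), p (γ r) := by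
    intro k
    rw [Finset.prod_range_succ]
    nlinarith [salemBeta_add_one_le p hp hsum (γ k), prod_nonneg' p hp γ k]
  calc ∑ k ∈ Finset.range n, salemBeta p (γ k) * ∏ r ∈ Finset.range k, p (γ r)
      ≤ ∑ k ∈ Finset.range n, ((∏ r ∈ Finset.range k, p (γ r)) -
          ∏ r ∈ Finset.range (k+1), p (γ r)) := Finset.sum_le_sum fun k _ => key k
    _ = (∏ r ∈ Finset.range 0, p (γ r)) - ∏ r ∈ Finset.range n, p (γ r) :=
        Finset.sum_range_sub' _ n
    _ ≤ 1 := by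
        have := prod_nonneg' p hp γ n
        simp only [Finset.range_zero, Finset.prod_empty]
        linarith

lemma salemVal_decomp (p : Fin 3 → ℝ) (hp : ∀ i, 0 < p i ∧ p i < 1)
    (hsum : p 0 + p 1 + p 2 = 1) (γ : ℕ → Fin 3) (m : ℕ) :
    salemVal p γ = (∑ k ∈ Finset.range m, salemBeta p (γ k) * ∏ r ∈ Finset.range k, p (γ r))
      + (∏ r ∈ Finset.range m, p (γ r)) * salemVal p (fun k => γ (m + k)) := by
  have hS := salemSummable p hp hsum γ
  rw [salemVal, ← Summable.sum_add_tsum_nat_add m hS]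
  congr 1
  rw [salemVal, ← tsum_mul_left]
  apply tsum_congr
  intro k
  rw [add_comm k m, Finset.prod_range_add, mul_left_comm]

/-- The value map is monotone with respect to the lexicographic order on digit
sequences: if `γ = δ` or at the first index where they differ the digit of `γ` is
smaller, then `val γ ≤ val δ`. -/
theorem salemVal_lex_monotone (p : Fin 3 → ℝ) (hp : ∀ i, 0 < p i ∧ p i < 1)
    (hsum : p 0 + p 1 + p 2 = 1) (γ δ : ℕ → Fin 3)
    (h : γ = δ ∨ ∃ m : ℕ, (∀ r < m, γ r = δ r) ∧ γ m < δ m) :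
    salemVal p γ ≤ salemVal p δ := by
  rcases h with rfl | ⟨m, hagree, hlt⟩
  · exact le_rfl
  have hdγ := salemVal_decomp p hp hsum γ (m+1)
  have hdδ := salemVal_decomp p hp hsum δ (m+1)
  have hP : ∏ r ∈ Finset.range m, p (γ r) = ∏ r ∈ Finset.range m, p (δ r) :=
    Finset.prod_congr rfl fun r hr => by rw [hagree r (Finset.mem_range.mp hr)]
  have hSum : ∑ k ∈ Finset.range m, salemBeta p (γ k) * ∏ r ∈ Finset.range k, p (γ r)
      = ∑ k ∈ Finset.range m, salemBeta p (δ k) * ∏ r ∈ Finset.range k, p (δ r) := by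
    apply Finset.sum_congr rfl
    intro k hk
    have hk' := Finset.mem_range.mp hk
    rw [hagree k hk']
    congr 1
    exact Finset.prod_congr rfl fun r hr =>
      by rw [hagree r (lt_trans (Finset.mem_range.mp hr) hk')]
  rw [hdγ, hdδ, Finset.sum_range_succ, Finset.sum_range_succ,
    Finset.prod_range_succ, Finset.prod_range_succ, hP, hSum]
  set Pm := ∏ r ∈ Finset.range m, p (δ r) with hPm
  have hPm0 : 0 ≤ Pm := prod_nonneg' p hp δ m
  have hkey := salemBeta_add_le p hp hsum hlt
  have hv1 : salemVal p (fun k => γ (m + 1 + k)) ≤ 1 := salemVal_le_one p hp hsum _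
  have hv0 : 0 ≤ salemVal p (fun k => γ (m + 1 + k)) := salemVal_nonneg p hp _
  have hw0 : 0 ≤ salemVal p (fun k => δ (m + 1 + k)) := salemVal_nonneg p hp _
  have hpg := (hp (γ m)).1
  have hpd := (hp (δ m)).1
  have hbd := salemBeta_nonneg p hp (δ m)
  nlinarith [mul_nonneg (mul_nonneg hPm0 hpd.le) hw0,
    mul_le_mul_of_nonneg_left hv1 (mul_nonneg hPm0 hpg.le),
    mul_le_mul_of_nonneg_left hkey hPm0,
    mul_nonneg (mul_nonneg hPm0 hpg.le) hv0]
end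

section
/- Strict inclusion of subcylinders and strict interleaving of images: for any finite word d₁, …, d_m of digits in {0,1,2} and any digit d ∈ {0,1,2} with image c = θ(d), writing c_r = θ(d_r), one has inf Λ_{c₁…c_m c} ≥ inf Λ_{c₁…c_m}, sup Λ_{c₁…c_m c} ≤ sup Λ_{c₁…c_m}, and inf Λ_{c₁…c_m c} < val(θ∘(d₁…d_m d(2))) < sup Λ_{c₁…c_m c}; in particular Λ_{c₁…c_m c} ⊂ Λ_{c₁…c_m}. -/
open scoped BigOperators

namespace SalemAux

variable {p : Fin 3 → ℝ}

lemma beta0 : salemBeta p 0 = 0 := by simp [salemBeta]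
lemma beta1 : salemBeta p 1 = p 0 := by
  rw [salemBeta, show (Finset.univ.filter (fun t => t < (1:Fin 3))) = {0} from rfl,
    Finset.sum_singleton]
lemma beta2 : salemBeta p 2 = p 0 + p 1 := by
  rw [salemBeta, show (Finset.univ.filter (fun t => t < (2:Fin 3))) = {0,1} from rfl]; simp

/-- Prefix sum. -/
noncomputable def Sv (p : Fin 3 → ℝ) (m : ℕ) (c : ℕ → Fin 3) : ℝ :=
  ∑ k ∈ Finset.range m, salemBeta p (c k) * ∏ r ∈ Finset.range k, p (c r)

/-- Prefix product. -/
noncomputable def Pv (p : Fin 3 → ℝ) (m : ℕ) (c : ℕ → Fin 3) : ℝ :=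
  ∏ r ∈ Finset.range m, p (c r)

lemma Sv_succ (m : ℕ) (c : ℕ → Fin 3) :
    Sv p (m+1) c = Sv p m c + salemBeta p (c m) * Pv p m c := by
  simp only [Sv, Pv, Finset.sum_range_succ]

lemma Pv_succ (m : ℕ) (c : ℕ → Fin 3) : Pv p (m+1) c = Pv p m c * p (c m) :=
  Finset.prod_range_succ _ _

lemma Sv_congr (m : ℕ) {c₁ c₂ : ℕ → Fin 3} (h : ∀ r < m, c₁ r = c₂ r) :
    Sv p m c₁ = Sv p m c₂ := by
  refine Finset.sum_congr rfl fun k hk => ?_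
  rw [h k (Finset.mem_range.1 hk)]
  congr 1
  exact Finset.prod_congr rfl fun r hr =>
    by rw [h r (lt_trans (Finset.mem_range.1 hr) (Finset.mem_range.1 hk))]

lemma Pv_congr (m : ℕ) {c₁ c₂ : ℕ → Fin 3} (h : ∀ r < m, c₁ r = c₂ r) :
    Pv p m c₁ = Pv p m c₂ :=
  Finset.prod_congr rfl fun r hr => by rw [h r (Finset.mem_range.1 hr)]

variable (hp : ∀ i, 0 < p i ∧ p i < 1) (hsum : p 0 + p 1 + p 2 = 1)
include hp

lemma beta_nonneg (j : Fin 3) : 0 ≤ salemBeta p j :=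
  Finset.sum_nonneg fun t _ => (hp t).1.le

lemma beta_pos_of_ne {j : Fin 3} (h : j ≠ 0) : 0 < salemBeta p j := by
  fin_cases j
  · exact absurd rfl h
  · show (0:ℝ) < salemBeta p 1
    rw [beta1]; exact (hp 0).1
  · show (0:ℝ) < salemBeta p 2
    rw [beta2]; have := (hp 0).1; have := (hp 1).1; linarith

include hsum in
lemma beta_add_le (j : Fin 3) : salemBeta p j + p j ≤ 1 := by
  fin_cases j
  · show salemBeta p 0 + p 0 ≤ 1
    rw [beta0]; have := (hp 1).1; have := (hp 2).1; linarith
  · show salemBeta p 1 + p 1 ≤ 1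
    rw [beta1]; have := (hp 2).1; linarith
  · show salemBeta p 2 + p 2 ≤ 1
    rw [beta2]; linarith

lemma prod_nonneg' (γ : ℕ → Fin 3) (k : ℕ) : 0 ≤ ∏ r ∈ Finset.range k, p (γ r) :=
  Finset.prod_nonneg fun r _ => (hp (γ r)).1.le

lemma Pv_pos (m : ℕ) (c : ℕ → Fin 3) : 0 < Pv p m c :=
  Finset.prod_pos fun r _ => (hp (c r)).1

lemma term_nonneg (γ : ℕ → Fin 3) (k : ℕ) :
    0 ≤ salemBeta p (γ k) * ∏ r ∈ Finset.range k, p (γ r) :=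
  mul_nonneg (beta_nonneg hp _) (prod_nonneg' hp γ k)

include hsum in
lemma sum_range_le (γ : ℕ → Fin 3) (n : ℕ) :
    ∑ k ∈ Finset.range n, salemBeta p (γ k) * ∏ r ∈ Finset.range k, p (γ r) ≤ 1 := by
  have h1 : ∀ k, salemBeta p (γ k) * ∏ r ∈ Finset.range k, p (γ r) ≤
      (∏ r ∈ Finset.range k, p (γ r)) - ∏ r ∈ Finset.range (k+1), p (γ r) := by
    intro k
    rw [Finset.prod_range_succ]
    have hb := beta_add_le hp hsum (γ k)
    have hpr := prod_nonneg' hp γ k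
    nlinarith [(hp (γ k)).1]
  calc ∑ k ∈ Finset.range n, salemBeta p (γ k) * ∏ r ∈ Finset.range k, p (γ r)
      ≤ ∑ k ∈ Finset.range n,
          ((∏ r ∈ Finset.range k, p (γ r)) - ∏ r ∈ Finset.range (k+1), p (γ r)) :=
        Finset.sum_le_sum fun k _ => h1 k
    _ = (∏ r ∈ Finset.range 0, p (γ r)) - ∏ r ∈ Finset.range n, p (γ r) := by
        rw [Finset.sum_range_sub' (fun k => ∏ r ∈ Finset.range k, p (γ r))]
    _ ≤ 1 := by
        have := prod_nonneg' hp γ n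
        simp only [Finset.range_zero, Finset.prod_empty]
        linarith

include hsum in
lemma summable_term (γ : ℕ → Fin 3) :
    Summable (fun k => salemBeta p (γ k) * ∏ r ∈ Finset.range k, p (γ r)) :=
  summable_of_sum_range_le (term_nonneg hp γ) (sum_range_le hp hsum γ)

lemma val_nonneg (γ : ℕ → Fin 3) : 0 ≤ salemVal p γ :=
  tsum_nonneg (term_nonneg hp γ)

include hsum in
lemma val_le_one (γ : ℕ → Fin 3) : salemVal p γ ≤ 1 :=
  Real.tsum_le_of_sum_range_le (term_nonneg hp γ) (sum_range_le hp hsum γ)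

include hsum in
lemma val_decomp (m : ℕ) (c γ : ℕ → Fin 3) (h : ∀ r < m, γ r = c r) :
    salemVal p γ = Sv p m c + Pv p m c * salemVal p (fun k => γ (m + k)) := by
  have hs := summable_term hp hsum γ
  simp only [Sv, Pv]
  rw [salemVal, ← Summable.sum_add_tsum_nat_add m hs]
  congr 1
  · exact Finset.sum_congr rfl fun k hk => by
      rw [h k (Finset.mem_range.1 hk)]
      congr 1
      exact Finset.prod_congr rfl fun r hr => by
        rw [h r (lt_trans (Finset.mem_range.1 hr) (Finset.mem_range.1 hk))]
  · rw [salemVal, ← tsum_mul_left]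
    apply tsum_congr
    intro k
    rw [show k + m = m + k from Nat.add_comm k m, Finset.prod_range_add]
    have : ∏ x ∈ Finset.range m, p (γ x) = ∏ r ∈ Finset.range m, p (c r) :=
      Finset.prod_congr rfl fun r hr => by rw [h r (Finset.mem_range.1 hr)]
    rw [this]; ring

omit hsum in
lemma val_const (j : Fin 3) : salemVal p (fun _ => j) = salemBeta p j * (1 - p j)⁻¹ := by
  rw [salemVal]
  have : ∀ k : ℕ, salemBeta p j * ∏ r ∈ Finset.range k, p j = salemBeta p j * (p j)^k := by
    intro k; rw [Finset.prod_const, Finset.card_range]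
  rw [tsum_congr this, tsum_mul_left, tsum_geometric_of_lt_one (hp j).1.le (hp j).2]

include hsum in
lemma cyl_bounds {m : ℕ} {c : ℕ → Fin 3} {x : ℝ} (hx : x ∈ cylinder p m c) :
    Sv p m c ≤ x ∧ x ≤ Sv p m c + Pv p m c := by
  obtain ⟨γ, hγ, rfl⟩ := hx
  rw [val_decomp hp hsum m c γ hγ]
  have h0 := val_nonneg hp (fun k => γ (m + k))
  have h1 := val_le_one hp hsum (fun k => γ (m + k))
  have hPv := Pv_pos hp m c
  constructor
  · nlinarith
  · nlinarith

include hsum in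
lemma mem_bot (m : ℕ) (c : ℕ → Fin 3) : Sv p m c ∈ cylinder p m c := by
  refine ⟨extendW m c 0, fun r hr => if_pos hr, ?_⟩
  rw [val_decomp hp hsum m c (extendW m c 0) (fun r hr => if_pos hr)]
  have : (fun k => extendW m c 0 (m + k)) = fun _ => (0 : Fin 3) := by
    funext k; simp [extendW]
  rw [this, val_const hp 0, beta0]
  ring

include hsum in
lemma mem_top (m : ℕ) (c : ℕ → Fin 3) : Sv p m c + Pv p m c ∈ cylinder p m c := by
  refine ⟨extendW m c 2, fun r hr => if_pos hr, ?_⟩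
  rw [val_decomp hp hsum m c (extendW m c 2) (fun r hr => if_pos hr)]
  have : (fun k => extendW m c 2 (m + k)) = fun _ => (2 : Fin 3) := by
    funext k; simp [extendW]
  rw [this, val_const hp 2, beta2]
  have h2 : (1 : ℝ) - p 2 = p 0 + p 1 := by linarith
  have hpos : (0:ℝ) < p 0 + p 1 := by have := (hp 0).1; have := (hp 1).1; linarith
  rw [h2, mul_inv_cancel₀ (ne_of_gt hpos)]
  ring

include hsum in
lemma sInf_cyl (m : ℕ) (c : ℕ → Fin 3) : sInf (cylinder p m c) = Sv p m c := by
  apply le_antisymm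
  · exact csInf_le ⟨Sv p m c, fun x hx => (cyl_bounds hp hsum hx).1⟩ (mem_bot hp hsum m c)
  · exact le_csInf ⟨_, mem_bot hp hsum m c⟩ fun x hx => (cyl_bounds hp hsum hx).1

include hsum in
lemma sSup_cyl (m : ℕ) (c : ℕ → Fin 3) : sSup (cylinder p m c) = Sv p m c + Pv p m c := by
  apply le_antisymm
  · exact csSup_le ⟨_, mem_top hp hsum m c⟩ fun x hx => (cyl_bounds hp hsum hx).2
  · exact le_csSup ⟨Sv p m c + Pv p m c, fun x hx => (cyl_bounds hp hsum hx).2⟩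
      (mem_top hp hsum m c)

end SalemAux

open SalemAux in
/-- Strict inclusion of subcylinders and strict interleaving of images: with
`c_r = θ(d_r)` and `c = θ(d')`, the subcylinder with base `c₀…c_m c` has infimum ≥ and
supremum ≤ those of the cylinder with base `c₀…c_m`, the value of
`θ∘(d₀…d_m d'(2))` lies strictly between the infimum and supremum of the subcylinder,
and the subcylinder is strictly contained in the cylinder. -/
theorem theta_subcylinder_strict (p : Fin 3 → ℝ) (hp : ∀ i, 0 < p i ∧ p i < 1)
    (hsum : p 0 + p 1 + p 2 = 1) (m : ℕ) (d : ℕ → Fin 3) (d' : Fin 3) :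
    sInf (cylinder p m (fun k => theta (d k))) ≤
        sInf (cylinder p (m + 1) (fun k => if k = m then theta d' else theta (d k))) ∧
      sSup (cylinder p (m + 1) (fun k => if k = m then theta d' else theta (d k))) ≤
        sSup (cylinder p m (fun k => theta (d k))) ∧
      sInf (cylinder p (m + 1) (fun k => if k = m then theta d' else theta (d k))) <
        salemVal p
          (fun k => theta (if k < m then d k else if k = m then d' else 2)) ∧
      salemVal p (fun k => theta (if k < m then d k else if k = m then d' else 2)) <
        sSup (cylinder p (m + 1) (fun k => if k = m then theta d' else theta (d k))) ∧
      cylinder p (m + 1) (fun k => if k = m then theta d' else theta (d k)) ⊂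
        cylinder p m (fun k => theta (d k)) := by
  have hagree : ∀ r < m,
      (fun k => if k = m then theta d' else theta (d k)) r = (fun k => theta (d k)) r :=
    fun r hr => if_neg (Nat.ne_of_lt hr)
  have hS := Sv_congr (p := p) m hagree
  have hP := Pv_congr (p := p) m hagree
  have hcm : (if m = m then theta d' else theta (d m)) = theta d' := if_pos rfl
  have hS1 : Sv p (m+1) (fun k => if k = m then theta d' else theta (d k)) =
      Sv p m (fun k => theta (d k)) + salemBeta p (theta d') * Pv p m (fun k => theta (d k)) := by
    rw [Sv_succ, hS, hP, hcm]
  have hP1 : Pv p (m+1) (fun k => if k = m then theta d' else theta (d k)) =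
      Pv p m (fun k => theta (d k)) * p (theta d') := by
    rw [Pv_succ, hP, hcm]
  have hPpos := Pv_pos hp m (fun k => theta (d k))
  have hbnn := beta_nonneg hp (theta d')
  have hba := beta_add_le hp hsum (theta d')
  have hpd := hp (theta d')
  -- the middle value
  have hγagree : ∀ r < m + 1,
      (fun k => theta (if k < m then d k else if k = m then d' else 2)) r =
      (fun k => if k = m then theta d' else theta (d k)) r := by
    intro r hr
    by_cases h : r = m
    · subst h; simp
    · have hrm : r < m := by omega
      simp [hrm, h]
  have htail : (fun k => (fun k => theta (if k < m then d k else if k = m then d' else 2))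
      ((m+1) + k)) = fun _ => (1 : Fin 3) := by
    funext k
    have h1 : ¬ (m+1+k < m) := by omega
    have h2 : ¬ (m+1+k = m) := by omega
    simp only [if_neg h1, if_neg h2]
    rfl
  have hval : salemVal p (fun k => theta (if k < m then d k else if k = m then d' else 2)) =
      Sv p (m+1) (fun k => if k = m then theta d' else theta (d k)) +
      Pv p (m+1) (fun k => if k = m then theta d' else theta (d k)) * (p 0 * (1 - p 1)⁻¹) := by
    rw [val_decomp hp hsum (m+1) _ _ hγagree, htail, val_const hp 1, beta1]
  have hv1pos : 0 < p 0 * (1 - p 1)⁻¹ := by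
    have := (hp 0).1
    have h1 : (0:ℝ) < 1 - p 1 := by linarith [(hp 1).2]
    positivity
  have hv1lt : p 0 * (1 - p 1)⁻¹ < 1 := by
    have h1 : (0:ℝ) < 1 - p 1 := by linarith [(hp 1).2]
    rw [← div_eq_mul_inv, div_lt_one h1]
    have := (hp 2).1
    linarith
  have hPpos1 := Pv_pos hp (m+1) (fun k => if k = m then theta d' else theta (d k))
  have hsub : cylinder p (m + 1) (fun k => if k = m then theta d' else theta (d k)) ⊆
      cylinder p m (fun k => theta (d k)) := by
    rintro x ⟨γ, hγ, rfl⟩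
    exact ⟨γ, fun r hr => by rw [hγ r (by omega)]; exact if_neg (Nat.ne_of_lt hr), rfl⟩
  refine ⟨?_, ?_, ?_, ?_, ?_⟩
  · rw [sInf_cyl hp hsum, sInf_cyl hp hsum, hS1]
    nlinarith
  · rw [sSup_cyl hp hsum, sSup_cyl hp hsum, hS1, hP1]
    nlinarith
  · rw [sInf_cyl hp hsum, hval]
    nlinarith
  · rw [sSup_cyl hp hsum, hval]
    nlinarith
  · rw [Set.ssubset_iff_of_subset hsub]
    by_cases hb : salemBeta p (theta d') = 0
    · refine ⟨Sv p m (fun k => theta (d k)) + Pv p m (fun k => theta (d k)),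
        mem_top hp hsum m _, fun hmem => ?_⟩
      have h2 := (cyl_bounds hp hsum hmem).2
      rw [hS1, hP1, hb] at h2
      nlinarith
    · have hbpos : 0 < salemBeta p (theta d') := lt_of_le_of_ne hbnn (Ne.symm hb)
      refine ⟨Sv p m (fun k => theta (d k)), mem_bot hp hsum m _, fun hmem => ?_⟩
      have h1 := (cyl_bounds hp hsum hmem).1
      rw [hS1] at h1
      nlinarith
end
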